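/- arXiv:2402.02295 — 7 statements merged into one kernel-verified Lean document; each statement's English description precedes it below -/
import Mathlib

section
/- Let x₀ < x₁ < ⋯ < x_n be real numbers, 0 ≤ i₀ ≤ n−1, and f_L ≠ f_R real numbers. Let p be the unique polynomial of degree at most n with p(x_i) = f_L for i ≤ i₀ and p(x_i) = f_R for i > i₀. Then for each s with 0 ≤ s ≤ n, the polynomial p^{(s)} has exact degree n − s, and for 1 ≤ s ≤ n it has exactly n − s real roots (counted without multiplicity, all simple). -/
/-!
Between two consecutive nodes on the same side of the jump, `p` takes equal values, so Rolle's
theorem gives `n - 1` distinct real roots of `p'`. Since `deg p' ≤ n - 1`, this forces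
`deg p = n` and makes all roots of `p'` real and simple. Each further derivative loses at most one
distinct real root (Rolle between consecutive roots) and exactly one degree, so `p^{(s)}` keeps
`n - s` distinct real roots against degree `n - s`.
-/

open Polynomial

namespace Polynomial

section Degree

variable {R : Type*} [Semiring R] [IsAddTorsionFree R]

theorem natDegree_iterate_derivative_eq (p : R[X]) (s : ℕ) :
    (derivative^[s] p).natDegree = p.natDegree - s := by
  induction s with
  | zero => rfl
  | succ s ih => rw [Function.iterate_succ_apply', natDegree_derivative, ih, Nat.sub_sub]

theorem coeff_iterate_derivative_natDegree_sub_ne_zero {p : R[X]} (hp : p ≠ 0) {s : ℕ}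
    (hs : s ≤ p.natDegree) : (derivative^[s] p).coeff (p.natDegree - s) ≠ 0 := by
  rw [coeff_iterate_derivative, Nat.sub_add_cancel hs]
  exact smul_ne_zero (Nat.descFactorial_eq_zero_iff_lt.not.mpr hs.not_gt)
    (leadingCoeff_ne_zero.mpr hp)

end Degree

section Roots

variable {R : Type*} [CommRing R] [IsDomain R] [DecidableEq R]

theorem card_roots_eq_natDegree_of_natDegree_le_card_roots_toFinset {q : R[X]}
    (h : q.natDegree ≤ q.roots.toFinset.card) : Multiset.card q.roots = q.natDegree :=
  le_antisymm (card_roots' q) (h.trans (Multiset.toFinset_card_le _))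

theorem nodup_roots_of_natDegree_le_card_roots_toFinset {q : R[X]}
    (h : q.natDegree ≤ q.roots.toFinset.card) : q.roots.Nodup := by
  rw [← Multiset.toFinset_card_eq_card_iff_nodup]
  exact le_antisymm (Multiset.toFinset_card_le _)
    (card_roots_eq_natDegree_of_natDegree_le_card_roots_toFinset h ▸ h)

end Roots

theorem card_le_card_roots_toFinset_derivative {k : ℕ} {q : ℝ[X]} (hq : derivative q ≠ 0)
    {z : Fin (k + 1) → ℝ} (hz : StrictMono z) {t : Finset (Fin k)}
    (h : ∀ i ∈ t, q.eval (z i.castSucc) = q.eval (z i.succ)) :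
    t.card ≤ (derivative q).roots.toFinset.card := by
  have hrolle : ∀ i ∈ t, ∃ c ∈ Set.Ioo (z i.castSucc) (z i.succ), (derivative q).IsRoot c :=
    fun i hi => by
      obtain ⟨c, hc, hc0⟩ := exists_deriv_eq_zero (hz Fin.castSucc_lt_succ) q.continuousOn (h i hi)
      exact ⟨c, hc, by rwa [IsRoot, ← q.deriv]⟩
  choose! c hc hroot using hrolle
  have hmono : StrictMonoOn c t := fun i hi j hj hij =>
    calc c i < z i.succ := (hc i hi).2
      _ ≤ z j.castSucc := hz.monotone (Fin.succ_le_castSucc_iff.mpr hij)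
      _ < c j := (hc j hj).1
  refine Finset.card_le_card_of_injOn c (fun i hi => ?_) hmono.injOn
  rw [Finset.mem_coe, Multiset.mem_toFinset, mem_roots hq]
  exact hroot i hi

theorem card_roots_toFinset_sub_le_iterate_derivative (q : ℝ[X]) (k : ℕ) :
    q.roots.toFinset.card - k ≤ (derivative^[k] q).roots.toFinset.card := by
  induction k with
  | zero => simp
  | succ k ih =>
    rw [Function.iterate_succ_apply']
    have := card_roots_toFinset_le_derivative (derivative^[k] q)
    omega

end Polynomial

section StepInterpolation

variable {n i₀ : ℕ} {x : Fin (n + 1) → ℝ} {fL fR : ℝ} {p : ℝ[X]}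

theorem card_roots_toFinset_derivative_of_step (hx : StrictMono x) (hi₀ : i₀ < n)
    (hp : ∀ i : Fin (n + 1), p.eval (x i) = if (i : ℕ) ≤ i₀ then fL else fR)
    (hp' : derivative p ≠ 0) : n - 1 ≤ (derivative p).roots.toFinset.card := by
  have hsame : ∀ i ∈ Finset.univ.erase (⟨i₀, hi₀⟩ : Fin n),
      p.eval (x i.castSucc) = p.eval (x i.succ) := by
    intro i hi
    have hi : (i : ℕ) ≠ i₀ := fun h => (Finset.mem_erase.mp hi).1 (Fin.ext h)
    rw [hp, hp, Fin.val_castSucc, Fin.val_succ]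
    split_ifs <;> first | rfl | omega
  simpa [Finset.card_erase_of_mem] using card_le_card_roots_toFinset_derivative hp' hx hsame

theorem natDegree_eq_of_step (hx : StrictMono x) (hi₀ : i₀ < n) (hf : fL ≠ fR)
    (hdeg : p.natDegree ≤ n)
    (hp : ∀ i : Fin (n + 1), p.eval (x i) = if (i : ℕ) ≤ i₀ then fL else fR) :
    p.natDegree = n := by
  have hp' : derivative p ≠ 0 := by
    rw [Ne, derivative_eq_zero, natDegree_eq_zero]
    rintro ⟨a, rfl⟩
    have h0 := hp 0
    have hn := hp (Fin.last n)
    simp only [eval_C, Fin.val_zero, Fin.val_last, zero_le, if_true, if_neg hi₀.not_ge] at h0 hn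
    exact hf (h0.symm.trans hn)
  have hroots := card_roots_toFinset_derivative_of_step hx hi₀ hp hp'
  have hcard := (Multiset.toFinset_card_le (derivative p).roots).trans (card_roots' _)
  have hpos : p.natDegree ≠ 0 := mt derivative_eq_zero.mpr hp'
  rw [natDegree_derivative] at hcard
  omega

end StepInterpolation

/-- Step-data interpolation: the `s`-th derivative of the interpolating polynomial of
step data has exact degree `n - s`, and for `1 ≤ s ≤ n` it has exactly `n - s` real
roots, all simple. -/
theorem step_interpolation_derivatives
    (n : ℕ) (hn : 1 ≤ n) (x : Fin (n + 1) → ℝ) (hx : StrictMono x)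
    (i₀ : ℕ) (hi₀ : i₀ ≤ n - 1) (fL fR : ℝ) (hf : fL ≠ fR)
    (p : Polynomial ℝ) (hdeg : p.natDegree ≤ n)
    (hp : ∀ i : Fin (n + 1), p.eval (x i) = if (i : ℕ) ≤ i₀ then fL else fR) :
    ∀ s : ℕ, s ≤ n →
      ((Polynomial.derivative^[s] p).natDegree = n - s ∧
        (Polynomial.derivative^[s] p).coeff (n - s) ≠ 0) ∧
      (1 ≤ s →
        Multiset.card (Polynomial.derivative^[s] p).roots = n - s ∧
        (Polynomial.derivative^[s] p).roots.Nodup) := by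
  intro s hs
  have hi₀n : i₀ < n := by omega
  have hpn := natDegree_eq_of_step hx hi₀n hf hdeg hp
  have hpne : p ≠ 0 := by rintro rfl; simp at hpn; omega
  have hdegs : (derivative^[s] p).natDegree = n - s := by
    rw [natDegree_iterate_derivative_eq, hpn]
  refine ⟨⟨hdegs, hpn ▸ coeff_iterate_derivative_natDegree_sub_ne_zero hpne (hpn ▸ hs)⟩,
    fun hs1 => ?_⟩
  obtain ⟨k, rfl⟩ : ∃ k, s = k + 1 := ⟨s - 1, by omega⟩
  have hp' : derivative p ≠ 0 := by rw [Ne, derivative_eq_zero]; omega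
  have hsimple : (derivative^[k + 1] p).natDegree ≤ (derivative^[k + 1] p).roots.toFinset.card := by
    have h1 := card_roots_toFinset_derivative_of_step hx hi₀n hp hp'
    have h2 := card_roots_toFinset_sub_le_iterate_derivative (derivative p) k
    rw [hdegs, Function.iterate_succ_apply]
    omega
  exact ⟨hdegs ▸ card_roots_eq_natDegree_of_natDegree_le_card_roots_toFinset hsimple,
    nodup_roots_of_natDegree_le_card_roots_toFinset hsimple⟩
end

section
/- In particular (case s = n−2 of the preceding setup), the second-degree polynomial p^{(n−2)} obtained from the step-data interpolation polynomial has strictly positive discriminant, i.e., if p^{(n−2)}(w) = Aw² + Bw + C then B² − 4AC > 0. -/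
open Polynomial

/-!
On each gap between consecutive nodes on the same side of the jump, `p` takes equal values at
both ends, so Rolle's theorem puts a root of `p'` in each of these `n - 1` disjoint gaps. Each
further derivative loses at most one distinct real root, so the quadratic `p^{(n-2)}` still has
two distinct real roots, and a quadratic with two distinct roots has positive discriminant.
-/

theorem discrim_pos_of_quadratic_eq_zero_of_ne {K : Type*} [Field K] [LinearOrder K]
    [IsStrictOrderedRing K] {a b c r s : K} (ha : a ≠ 0)
    (hr : a * (r * r) + b * r + c = 0) (hs : a * (s * s) + b * s + c = 0) (hrs : r ≠ s) :
    0 < discrim a b c := by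
  refine (discrim_eq_sq_of_quadratic_eq_zero hr ▸ sq_nonneg _).lt_of_ne' fun h ↦ hrs ?_
  rw [quadratic_eq_zero_iff_of_discrim_eq_zero ha h] at hr hs
  rw [hr, hs]

namespace Polynomial

variable {K : Type*} [Field K]

theorem eval_eq_quadratic {q : K[X]} (hq : q.natDegree ≤ 2) (t : K) :
    q.eval t = q.coeff 2 * (t * t) + q.coeff 1 * t + q.coeff 0 := by
  rw [eval_eq_sum_range' (n := 3) (by omega)]
  simp only [Finset.sum_range_succ, Finset.sum_range_zero]
  ring

theorem discrim_coeff_pos_of_two_le_card_roots [LinearOrder K] [IsStrictOrderedRing K]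
    {q : K[X]} (hdeg : q.natDegree ≤ 2) (hroots : 2 ≤ q.roots.toFinset.card) :
    0 < discrim (q.coeff 2) (q.coeff 1) (q.coeff 0) := by
  have hq : q ≠ 0 := by rintro rfl; simp at hroots
  have hdeg2 : q.natDegree = 2 :=
    hdeg.antisymm (hroots.trans ((Multiset.toFinset_card_le _).trans (card_roots' q)))
  obtain ⟨r, hr, s, hs, hrs⟩ := Finset.one_lt_card.mp hroots
  rw [Multiset.mem_toFinset, mem_roots hq, IsRoot, eval_eq_quadratic hdeg] at hr hs
  refine discrim_pos_of_quadratic_eq_zero_of_ne ?_ hr hs hrs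
  rw [← hdeg2]
  exact leadingCoeff_ne_zero.mpr hq

theorem derivative_ne_zero_of_eval_ne {R : Type*} [Semiring R] [IsAddTorsionFree R]
    {p : R[X]} {a b : R} (h : p.eval a ≠ p.eval b) :
    derivative p ≠ 0 := by
  intro hp
  rw [eq_C_of_natDegree_eq_zero (derivative_eq_zero.mp hp)] at h
  simp at h

theorem card_roots_toFinset_le_iterate_derivative (p : ℝ[X]) (k : ℕ) :
    p.roots.toFinset.card ≤ (derivative^[k] p).roots.toFinset.card + k := by
  induction k with
  | zero => simp
  | succ k ih =>
    have := card_roots_toFinset_le_derivative (derivative^[k] p)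
    rw [Function.iterate_succ_apply']
    omega

theorem card_filter_eval_eq_le_card_roots_derivative {m : ℕ} {x : Fin (m + 1) → ℝ}
    (hx : StrictMono x) {p : ℝ[X]} (hp : derivative p ≠ 0) :
    (Finset.univ.filter fun i : Fin m ↦ p.eval (x i.castSucc) = p.eval (x i.succ)).card ≤
      (derivative p).roots.toFinset.card := by
  have rolle : ∀ i : Fin m, p.eval (x i.castSucc) = p.eval (x i.succ) →
      ∃ c ∈ Set.Ioo (x i.castSucc) (x i.succ), (derivative p).IsRoot c := fun i hi ↦ by
    obtain ⟨c, hc, hc0⟩ := exists_deriv_eq_zero (hx i.castSucc_lt_succ) p.continuousOn hi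
    exact ⟨c, hc, by rwa [Polynomial.deriv] at hc0⟩
  choose! c hc hroot using rolle
  refine Finset.card_le_card_of_injOn c (fun i hi ↦ ?_) (StrictMonoOn.injOn fun i hi j hj hij ↦ ?_)
  · simp only [Finset.coe_filter, Finset.mem_univ, true_and, Set.mem_ofPred_eq] at hi
    exact Multiset.mem_toFinset.mpr ((mem_roots hp).mpr (hroot i hi))
  · simp only [Finset.coe_filter, Finset.mem_univ, true_and, Set.mem_ofPred_eq] at hi hj
    calc c i < x i.succ := (hc i hi).2
      _ ≤ x j.castSucc := hx.monotone (Fin.succ_le_castSucc_iff.mpr hij)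
      _ < c j := (hc j hj).1

end Polynomial

/-- The quadratic `(n-2)`-th derivative of the step-data interpolation polynomial
has strictly positive discriminant. -/
theorem step_interpolation_discriminant_pos
    (n : ℕ) (hn : 3 ≤ n) (x : Fin (n + 1) → ℝ) (hx : StrictMono x)
    (i₀ : ℕ) (hi₀ : i₀ ≤ n - 1) (fL fR : ℝ) (hf : fL ≠ fR)
    (p : Polynomial ℝ) (hdeg : p.natDegree ≤ n)
    (hp : ∀ i : Fin (n + 1), p.eval (x i) = if (i : ℕ) ≤ i₀ then fL else fR)
    (A B C : ℝ)
    (hA : A = (Polynomial.derivative^[n - 2] p).coeff 2)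
    (hB : B = (Polynomial.derivative^[n - 2] p).coeff 1)
    (hC : C = (Polynomial.derivative^[n - 2] p).coeff 0) :
    B ^ 2 - 4 * A * C > 0 := by
  have hp' : derivative p ≠ 0 := derivative_ne_zero_of_eval_ne (a := x 0) (b := x (Fin.last n))
    (by simpa [hp, if_neg (show ¬n ≤ i₀ by omega)] using hf)
  have hsteps : Finset.univ.erase (⟨i₀, by omega⟩ : Fin n) ⊆
      Finset.univ.filter fun i : Fin n ↦ p.eval (x i.castSucc) = p.eval (x i.succ) := by
    intro i hi
    simp only [Finset.mem_erase, ne_eq, Fin.ext_iff] at hi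
    simp only [Finset.mem_filter, Finset.mem_univ, true_and, hp, Fin.val_castSucc, Fin.val_succ]
    split_ifs <;> first | rfl | omega
  have hroots_deriv : n - 1 ≤ (derivative p).roots.toFinset.card := by
    simpa using (Finset.card_le_card hsteps).trans
      (card_filter_eval_eq_le_card_roots_derivative hx hp')
  have hroots : 2 ≤ (derivative^[n - 2] p).roots.toFinset.card := by
    have := card_roots_toFinset_le_iterate_derivative (derivative p) (n - 3)
    rw [← Function.iterate_succ_apply, show (n - 3).succ = n - 2 by omega] at this
    omega
  have hq : (derivative^[n - 2] p).natDegree ≤ 2 :=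
    (natDegree_iterate_derivative p (n - 2)).trans (by omega)
  subst hA hB hC
  exact discrim_coeff_pos_of_two_le_card_roots hq hroots
end

section
/- Let a₀ < a₁ < ⋯ < a_n be real numbers and let Ψ : Π_n → ℝ^{n+1} be given by Ψ(p) = (∫_{a₀−1/2}^{a₀+1/2} p, …, ∫_{a_n−1/2}^{a_n+1/2} p). Then Ψ is a linear bijection; i.e., for any prescribed cell averages there is a unique polynomial of degree at most n realizing them. -/
open Polynomial intervalIntegral

noncomputable def myAntideriv (p : Polynomial ℝ) : Polynomial ℝ :=
  p.sum fun k c => Polynomial.C (c / (k + 1)) * Polynomial.X ^ (k + 1)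

lemma myAntideriv_derivative (p : Polynomial ℝ) : (myAntideriv p).derivative = p := by
  conv_rhs => rw [← p.sum_C_mul_X_pow_eq]
  rw [myAntideriv, Polynomial.sum, Polynomial.sum, map_sum]
  refine Finset.sum_congr rfl fun k _ => ?_
  rw [derivative_C_mul, derivative_X_pow]
  have hk : ((k : ℝ) + 1) ≠ 0 := by positivity
  push_cast
  rw [← mul_assoc, ← C_mul, div_mul_cancel₀ _ hk]

lemma myAntideriv_natDegree (p : Polynomial ℝ) (n : ℕ) (h : p.natDegree ≤ n) :
    (myAntideriv p).natDegree ≤ n + 1 := by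
  refine (Polynomial.natDegree_sum_le _ _).trans ?_
  rw [Finset.fold_max_le]
  refine ⟨Nat.zero_le _, fun k hk => ?_⟩
  refine (natDegree_C_mul_le _ _).trans ?_
  rw [natDegree_X_pow]
  exact Nat.succ_le_succ ((le_natDegree_of_mem_supp k hk).trans h)

lemma integral_eval_eq (p : Polynomial ℝ) (b c : ℝ) :
    ∫ x in b..c, p.eval x = (myAntideriv p).eval c - (myAntideriv p).eval b := by
  refine intervalIntegral.integral_eq_sub_of_hasDerivAt (f := fun x => (myAntideriv p).eval x)
    (fun x _ => ?_)
    ((Polynomial.continuous p).intervalIntegrable _ _)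
  simpa [myAntideriv_derivative] using (myAntideriv p).hasDerivAt x

lemma coeff_comp_top (P : Polynomial ℝ) (c : ℝ) (m : ℕ) (h : P.natDegree ≤ m) :
    (P.comp (Polynomial.X + Polynomial.C c)).coeff m = P.coeff m := by
  have hdeg : (P.comp (Polynomial.X + Polynomial.C c)).natDegree = P.natDegree := by
    rw [natDegree_comp, natDegree_X_add_C, mul_one]
  rcases lt_or_eq_of_le h with h' | h'
  · rw [coeff_eq_zero_of_natDegree_lt (hdeg ▸ h'), coeff_eq_zero_of_natDegree_lt h']
  · have h1 : (Polynomial.X + Polynomial.C c).natDegree ≠ 0 := by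
      rw [natDegree_X_add_C]; exact one_ne_zero
    have hlc : (P.comp (Polynomial.X + Polynomial.C c)).leadingCoeff = P.leadingCoeff := by
      rw [leadingCoeff_comp h1, leadingCoeff_X_add_C, one_pow, mul_one]
    subst h'
    conv_lhs => rw [← hdeg, coeff_natDegree, hlc]
    exact coeff_natDegree.symm

lemma cell_key (n : ℕ) (a : Fin (n + 1) → ℝ) (ha : StrictMono a) (p : Polynomial ℝ)
    (hdeg : p.natDegree ≤ n)
    (h : ∀ i, (∫ x in (a i - 1/2)..(a i + 1/2), p.eval x) = 0) : p = 0 := by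
  set P := myAntideriv p with hP
  have hPdeg : P.natDegree ≤ n + 1 := myAntideriv_natDegree p n hdeg
  set Q : Polynomial ℝ := P.comp (Polynomial.X + Polynomial.C (1/2))
      - P.comp (Polynomial.X + Polynomial.C (-(1/2))) with hQ
  have hQev : ∀ x : ℝ, Q.eval x = P.eval (x + 1/2) - P.eval (x - 1/2) := by
    intro x; simp [hQ, eval_comp, sub_eq_add_neg]
  have hQdeg : Q.natDegree ≤ n := by
    rw [natDegree_le_iff_coeff_eq_zero]
    intro N hN
    have hd1 : (P.comp (Polynomial.X + Polynomial.C (1/2))).natDegree ≤ n + 1 := by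
      rw [natDegree_comp, natDegree_X_add_C, mul_one]; exact hPdeg
    have hd2 : (P.comp (Polynomial.X + Polynomial.C (-(1/2)))).natDegree ≤ n + 1 := by
      rw [natDegree_comp, natDegree_X_add_C, mul_one]; exact hPdeg
    rcases eq_or_lt_of_le (Nat.succ_le_of_lt hN) with hN' | hN'
    · rw [hQ, coeff_sub, coeff_comp_top _ _ _ (hPdeg.trans hN'.le),
        coeff_comp_top _ _ _ (hPdeg.trans hN'.le), sub_self]
    · rw [hQ, coeff_sub, coeff_eq_zero_of_natDegree_lt (lt_of_le_of_lt hd1 hN'),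
        coeff_eq_zero_of_natDegree_lt (lt_of_le_of_lt hd2 hN'), sub_self]
  have hQ0 : Q = 0 := by
    refine Polynomial.eq_zero_of_natDegree_lt_card_of_eval_eq_zero Q ha.injective
      (fun i => ?_) ?_
    · rw [hQev, ← integral_eval_eq]; exact h i
    · simpa using Nat.lt_succ_of_le hQdeg
  have hper : ∀ x : ℝ, P.eval (x + 1) = P.eval x := by
    intro x
    have := hQev (x + 1/2)
    rw [hQ0] at this
    simp only [eval_zero] at this
    have h2 : x + 1/2 + 1/2 = x + 1 := by ring
    have h3 : x + 1/2 - 1/2 = x := by ring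
    rw [h2, h3] at this
    linarith
  have hroots : ∀ k : ℕ, (P - Polynomial.C (P.eval 0)).eval (k : ℝ) = 0 := by
    intro k
    induction k with
    | zero => simp
    | succ m ih =>
      have := hper (m : ℝ)
      simp only [eval_sub, eval_C] at ih ⊢
      push_cast
      rw [this]
      linarith
  have hR : P - Polynomial.C (P.eval 0) = 0 := by
    refine Polynomial.eq_zero_of_infinite_isRoot _ ?_
    refine Set.Infinite.mono ?_ (Set.infinite_range_of_injective (Nat.cast_injective (R := ℝ)))
    rintro x ⟨k, rfl⟩
    exact hroots k
  have hPC : P = Polynomial.C (P.eval 0) := by linear_combination hR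
  have : p = P.derivative := (myAntideriv_derivative p).symm
  rw [this, hPC, derivative_C]

/-- Taking unit-length cell averages around `n+1` distinct points is a linear bijection
from the space of polynomials of degree at most `n` onto `ℝ^{n+1}`: any prescribed cell
averages are realized by a unique polynomial of degree at most `n`. -/
theorem cell_average_linear_bijection (n : ℕ) (a : Fin (n + 1) → ℝ) (ha : StrictMono a) :
    ∃ Ψ : Polynomial.degreeLT ℝ (n + 1) ≃ₗ[ℝ] (Fin (n + 1) → ℝ),
      ∀ (p : Polynomial.degreeLT ℝ (n + 1)) (i : Fin (n + 1)),
        Ψ p i = ∫ x in (a i - 1/2)..(a i + 1/2), (p : Polynomial ℝ).eval x := by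
  haveI : FiniteDimensional ℝ (Polynomial.degreeLT ℝ (n + 1)) :=
    (Polynomial.degreeLTEquiv ℝ (n + 1)).symm.finiteDimensional
  set Φ : Polynomial.degreeLT ℝ (n + 1) →ₗ[ℝ] (Fin (n + 1) → ℝ) :=
    { toFun := fun p i => ∫ x in (a i - 1/2)..(a i + 1/2), (p : Polynomial ℝ).eval x
      map_add' := by
        intro p q
        funext i
        simp only [Submodule.coe_add, eval_add, Pi.add_apply]
        rw [intervalIntegral.integral_add
          ((Polynomial.continuous _).intervalIntegrable _ _)
          ((Polynomial.continuous _).intervalIntegrable _ _)]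
      map_smul' := by
        intro c p
        funext i
        simp only [SetLike.val_smul, RingHom.id_apply, Pi.smul_apply, smul_eq_mul]
        rw [← intervalIntegral.integral_const_mul]
        congr 1
        funext x
        simp [Polynomial.smul_eval] } with hΦ
  have hinj : Function.Injective Φ := by
    rw [← LinearMap.ker_eq_bot]
    rw [LinearMap.ker_eq_bot']
    intro p hp
    have hdeg : (p : Polynomial ℝ).natDegree ≤ n := by
      by_cases h0 : (p : Polynomial ℝ) = 0
      · simp [h0]
      · have := p.2
        rw [Polynomial.mem_degreeLT] at this
        have := (Polynomial.natDegree_lt_iff_degree_lt h0).mpr (by exact_mod_cast this)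
        omega
    have hz : ∀ i, (∫ x in (a i - 1/2)..(a i + 1/2), (p : Polynomial ℝ).eval x) = 0 := by
      intro i
      exact congrFun hp i
    have := cell_key n a ha (p : Polynomial ℝ) hdeg hz
    exact Subtype.ext this
  have hrank : Module.finrank ℝ (Polynomial.degreeLT ℝ (n + 1))
      = Module.finrank ℝ (Fin (n + 1) → ℝ) :=
    (Polynomial.degreeLTEquiv ℝ (n + 1)).finrank_eq
  refine ⟨Φ.linearEquivOfInjective hinj hrank, fun p i => ?_⟩
  rw [LinearMap.linearEquivOfInjective_apply]
  rfl
end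

section
/- Let z ∈ ℝ, h > 0, and nodes x_{i,h} = z + a_i h with fixed a₀ < ⋯ < a_n. Let p_h be the interpolating polynomial of degree ≤ n with p_h(x_{i,h}) = f(x_{i,h}) for a function f ∈ C^{n+1} in a neighborhood of z. Write P_h(w) = p_h(z + wh) = Σ_{j=0}^n L_j(h) w^j. Then for each 0 ≤ j ≤ n, L_j(h) = (h^j/j!)·f^{(j)}(z) + O(h^{n+1}) as h → 0⁺. -/
/-!
After the substitution `x = z + w h`, the polynomial `p_h` becomes the polynomial of degree `≤ n`
interpolating `w ↦ f (z + w h)` at the fixed nodes `a_i`. Subtract the rescaled Taylor polynomial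
`T_h(w) = ∑_{k ≤ n} h^k f^{(k)}(z) / k! * w^k`. The difference still has degree `≤ n`, so by
Lagrange interpolation at the fixed nodes each of its coefficients is a fixed linear combination of
its values at the nodes. These values are the Taylor remainders `f (z + a_i h) - T_h(a_i)`, which
are `O(h^{n+1})`.
-/

open Polynomial Asymptotics Filter Topology Finset
open scoped Nat

theorem ContDiffAt.isBigO_sub_taylor_sum {E : Type*} [NormedAddCommGroup E] [NormedSpace ℝ E]
    {f : ℝ → E} {x₀ : ℝ} {n : ℕ} (hf : ContDiffAt ℝ (n + 1) f x₀) :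
    (fun x ↦ f x - ∑ k ∈ range (n + 1), ((k ! : ℝ)⁻¹ * (x - x₀) ^ k) • iteratedDeriv k f x₀)
      =O[𝓝 x₀] fun x ↦ (x - x₀) ^ (n + 1) := by
  obtain ⟨u, hu, hfu⟩ := hf.contDiffOn le_rfl (by simp)
  obtain ⟨ε, hε, hball⟩ := Metric.mem_nhds_iff.1 hu
  set s := Metric.ball x₀ ε
  have hderiv (k : ℕ) : iteratedDerivWithin k f s x₀ = iteratedDeriv k f x₀ :=
    iteratedDerivWithin_of_isOpen Metric.isOpen_ball (Metric.mem_ball_self hε)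
  have htaylor (m : ℕ) (x : ℝ) : taylorWithinEval f m s x₀ x =
      ∑ k ∈ range (m + 1), ((k ! : ℝ)⁻¹ * (x - x₀) ^ k) • iteratedDeriv k f x₀ := by
    simp only [taylor_within_apply, hderiv]
  -- Expand to order `n + 1`: the remainder is `o`, and the extra top term is `O`.
  have hremainder := taylor_isLittleO (convex_ball x₀ ε) (Metric.mem_ball_self hε)
    (n := n + 1) (by exact_mod_cast hfu.mono hball)
  rw [nhdsWithin_eq_nhds.2 (Metric.ball_mem_nhds x₀ hε)] at hremainder
  have hlast : (fun x ↦ (((n + 1) ! : ℝ)⁻¹ * (x - x₀) ^ (n + 1)) • iteratedDeriv (n + 1) f x₀)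
      =O[𝓝 x₀] fun x ↦ (x - x₀) ^ (n + 1) := by
    refine .of_bound (|((n + 1) ! : ℝ)⁻¹| * ‖iteratedDeriv (n + 1) f x₀‖) (.of_forall fun x ↦ ?_)
    rw [norm_smul, norm_mul, Real.norm_eq_abs, Real.norm_eq_abs]
    exact le_of_eq (by ring)
  refine (hremainder.isBigO.add hlast).congr_left fun x ↦ ?_
  rw [htaylor, sum_range_succ _ (n + 1)]
  abel

theorem Asymptotics.IsBigO.comp_add_mul_pow {E : Type*} [Norm E] {R : ℝ → E} {z : ℝ} {m : ℕ}
    (hR : R =O[𝓝 z] fun x ↦ (x - z) ^ m) (c : ℝ) :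
    (fun h ↦ R (z + c * h)) =O[𝓝 0] fun h ↦ h ^ m := by
  have hlim : Tendsto (fun h : ℝ ↦ z + c * h) (𝓝 0) (𝓝 z) :=
    (continuous_const.add (continuous_const_mul c)).tendsto' 0 z (by simp)
  refine (hR.comp_tendsto hlim).trans ?_
  exact ((isBigO_refl (fun h : ℝ ↦ h ^ m) _).const_mul_left (c ^ m)).congr_left fun h ↦ by
    simp [mul_pow]

namespace Polynomial

theorem degree_sum_range_C_mul_X_pow_lt {R : Type*} [Semiring R] (c : ℕ → R) (m : ℕ) :
    (∑ k ∈ range m, C (c k) * X ^ k).degree < (m : WithBot ℕ) := by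
  simpa only [Fin.sum_univ_eq_sum_range (fun k ↦ C (c k) * X ^ k)] using
    degree_sum_fin_lt fun k : Fin m ↦ c k

theorem coeff_sum_range_C_mul_X_pow {R : Type*} [Semiring R] (c : ℕ → R) {m j : ℕ} (hj : j < m) :
    (∑ k ∈ range m, C (c k) * X ^ k).coeff j = c j := by
  simp [finsetSum_coeff, hj]

theorem natDegree_comp_C_add_C_mul_X_le {R : Type*} [Semiring R] (q : R[X]) (a b : R) :
    (q.comp (C a + C b * X)).natDegree ≤ q.natDegree :=
  natDegree_comp_le.trans <| mul_le_of_le_one_right' <|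
    natDegree_C_add.trans_le ((natDegree_C_mul_le b X).trans natDegree_X_le)

end Polynomial

namespace Lagrange

variable {ι : Type*} [DecidableEq ι]

theorem coeff_eq_sum_coeff_basis_mul_eval {F : Type*} [Field F] {s : Finset ι} {v : ι → F}
    (hvs : Set.InjOn v s) {q : F[X]} (hq : q.degree < #s) (j : ℕ) :
    q.coeff j = ∑ i ∈ s, (Lagrange.basis s v i).coeff j * q.eval (v i) := by
  conv_lhs => rw [eq_interpolate hvs hq, interpolate_apply, finsetSum_coeff]
  exact sum_congr rfl fun i _ ↦ (coeff_C_mul _).trans (mul_comm _ _)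

theorem isBigO_coeff_of_isBigO_eval {𝕜 : Type*} [NormedField 𝕜] {s : Finset ι} {v : ι → 𝕜}
    (hvs : Set.InjOn v s) {α : Type*} {l : Filter α} {q : α → 𝕜[X]} {g : α → ℝ}
    (hdeg : ∀ᶠ x in l, (q x).degree < #s)
    (heval : ∀ i ∈ s, (fun x ↦ (q x).eval (v i)) =O[l] g) (j : ℕ) :
    (fun x ↦ (q x).coeff j) =O[l] g := by
  refine (IsBigO.fun_sum fun i hi ↦
    (heval i hi).const_mul_left ((Lagrange.basis s v i).coeff j)).congr' ?_ .rfl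
  filter_upwards [hdeg] with x hx
  exact (coeff_eq_sum_coeff_basis_mul_eval hvs hx j).symm

end Lagrange

/-- The coefficients of the rescaled interpolation polynomial
`P_h(w) = p_h(z + w h) = ∑_j L_j(h) w^j` satisfy `L_j(h) = h^j f^{(j)}(z)/j! + O(h^{n+1})`. -/
theorem rescaled_interpolation_coeffs
    (n : ℕ) (z : ℝ) (a : Fin (n + 1) → ℝ) (ha : StrictMono a)
    (f : ℝ → ℝ) (δ : ℝ) (hδ : 0 < δ) (hf : ContDiffOn ℝ (n + 1) f (Metric.ball z δ))
    (p : ℝ → Polynomial ℝ)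
    (hdeg : ∀ h : ℝ, 0 < h → (p h).natDegree ≤ n)
    (hinterp : ∀ h : ℝ, 0 < h → ∀ i : Fin (n + 1),
      (p h).eval (z + a i * h) = f (z + a i * h)) :
    ∀ j : ℕ, j ≤ n →
      (fun h : ℝ => ((p h).comp (Polynomial.C z + Polynomial.C h * Polynomial.X)).coeff j -
          h ^ j / (Nat.factorial j : ℝ) * iteratedDeriv j f z)
        =O[𝓝[>] (0 : ℝ)] fun h => h ^ (n + 1) := by
  intro j hj
  set T : ℝ → ℝ[X] := fun h ↦ ∑ k ∈ range (n + 1), C (h ^ k / k ! * iteratedDeriv k f z) * X ^ k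
  have hTaylor := (hf.contDiffAt (Metric.ball_mem_nhds z hδ)).isBigO_sub_taylor_sum
  refine (Lagrange.isBigO_coeff_of_isBigO_eval (s := univ) ha.injective.injOn
    (q := fun h ↦ (p h).comp (C z + C h * X) - T h) ?degree ?eval j).congr' ?coeff .rfl
  case degree =>
    filter_upwards [self_mem_nhdsWithin] with h (hh : 0 < h)
    rw [Finset.card_univ, Fintype.card_fin]
    refine (degree_sub_le _ _).trans_lt (max_lt ?_ (degree_sum_range_C_mul_X_pow_lt _ _))
    exact degree_le_natDegree.trans_lt (WithBot.coe_lt_coe.2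
      ((natDegree_comp_C_add_C_mul_X_le _ _ _).trans_lt (Nat.lt_succ_of_le (hdeg h hh))))
  case eval =>
    intro i _
    refine ((hTaylor.comp_add_mul_pow (a i)).mono nhdsWithin_le_nhds).congr' ?_ .rfl
    filter_upwards [self_mem_nhdsWithin] with h (hh : 0 < h)
    simp only [T, eval_sub, eval_comp, eval_finsetSum, eval_add, eval_mul, eval_C, eval_X,
      eval_pow, add_sub_cancel_left, smul_eq_mul]
    rw [mul_comm h, hinterp h hh i]
    exact congrArg _ (sum_congr rfl fun k _ ↦ by ring)
  case coeff =>
    filter_upwards with h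
    simp only [coeff_sub, T, coeff_sum_range_C_mul_X_pow _ (Nat.lt_succ_of_le hj)]
end

section
/- Let n ≥ 3 and f ∈ C^{n+1} near z with f^{(l)}(z) = 0 for 1 ≤ l ≤ n−1 and f^{(n)}(z) ≠ 0. Let z_h satisfy z_h − z = O(h) and set x_{i,h} = z_h + a_i h, a₀ < ⋯ < a_n. Let p_h be the polynomial of degree ≤ n interpolating f at the x_{i,h}, and write P_h^{(n−2)}(w) = A_h w² + B_h w + C_h, where P_h(w) = p_h(z + wh). Then the discriminant satisfies B_h² − 4 A_h C_h = O(h^{2n+1}) as h → 0⁺. -/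
open Polynomial Asymptotics Filter Topology Set

/-!
Write `D_k(h) = p_h^{(k)}(z)`. Since `P_h` is rescaled around `z`, `A_h = h^n D_n(h) / 2`,
`B_h = h^{n-1} D_{n-1}(h)` and `C_h = h^{n-2} D_{n-2}(h)`. By iterated Rolle, each
`f^{(k)} - p_h^{(k)}` with `k ≤ n` vanishes in the ball of radius `O(h)` around `z` holding the
nodes, and since `p_h^{(n+1)} = 0`, the mean value theorem applied downwards from the bound on
`f^{(n+1)}` gives `f^{(k)}(z) - D_k(h) = O(h^{n+1-k})`. As `f^{(n-1)}(z) = f^{(n-2)}(z) = 0`, this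
yields `D_n = O(1)`, `D_{n-1} = O(h²)` and `D_{n-2} = O(h³)`, hence `A_h = O(h^n)` and
`B_h, C_h = O(h^{n+1})`.
-/

section IteratedDeriv

variable {𝕜 : Type*} [NontriviallyNormedField 𝕜] {f : 𝕜 → 𝕜} {U : Set 𝕜} {N : WithTop ℕ∞}
  {k : ℕ}

theorem ContDiffOn.continuousOn_iteratedDeriv_of_isOpen (hf : ContDiffOn 𝕜 N f U)
    (hU : IsOpen U) (hk : k ≤ N) : ContinuousOn (iteratedDeriv k f) U :=
  (hf.continuousOn_iteratedDerivWithin hk hU.uniqueDiffOn).congr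
    (iteratedDerivWithin_of_isOpen hU).symm

theorem ContDiffOn.differentiableOn_iteratedDeriv_of_isOpen (hf : ContDiffOn 𝕜 N f U)
    (hU : IsOpen U) (hk : k < N) : DifferentiableOn 𝕜 (iteratedDeriv k f) U :=
  (hf.differentiableOn_iteratedDerivWithin hk hU.uniqueDiffOn).congr
    (iteratedDerivWithin_of_isOpen hU).symm

theorem ContDiffOn.hasDerivAt_iteratedDeriv_sub_eval (hf : ContDiffOn 𝕜 N f U)
    (hU : IsOpen U) (hk : k < N) (p : 𝕜[X]) {x : 𝕜} (hx : x ∈ U) :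
    HasDerivAt (fun y => iteratedDeriv k f y - (derivative^[k] p).eval y)
      (iteratedDeriv (k + 1) f x - (derivative^[k + 1] p).eval x) x := by
  rw [iteratedDeriv_succ, Function.iterate_succ_apply']
  exact (((hf.differentiableOn_iteratedDeriv_of_isOpen hU hk).differentiableAt
    (hU.mem_nhds hx)).hasDerivAt).sub (Polynomial.hasDerivAt _ x)

end IteratedDeriv

theorem exists_mem_Icc_eq_zero_of_hasDerivAt_chain {m : ℕ} (g : ℕ → ℝ → ℝ)
    (t : Fin (m + 1) → ℝ) (ht : StrictMono t)
    (hg : ∀ k < m, ∀ x ∈ Icc (t 0) (t (Fin.last m)), HasDerivAt (g k) (g (k + 1) x) x)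
    (h0 : ∀ i, g 0 (t i) = 0) : ∀ k ≤ m, ∃ ξ ∈ Icc (t 0) (t (Fin.last m)), g k ξ = 0 := by
  induction m generalizing g with
  | zero =>
    intro k hk
    obtain rfl : k = 0 := by omega
    exact ⟨t 0, left_mem_Icc.2 le_rfl, h0 0⟩
  | succ m ih =>
    have hsub : ∀ i : Fin (m + 1),
        Icc (t i.castSucc) (t i.succ) ⊆ Icc (t 0) (t (Fin.last (m + 1))) := fun i =>
      Icc_subset_Icc (ht.monotone (Fin.zero_le _)) (ht.monotone (Fin.le_last _))
    have hrolle : ∀ i : Fin (m + 1), ∃ s ∈ Ioo (t i.castSucc) (t i.succ), g 1 s = 0 := by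
      intro i
      have hderiv : ∀ x ∈ Icc (t i.castSucc) (t i.succ), HasDerivAt (g 0) (g 1 x) x :=
        fun x hx => hg 0 (by omega) x (hsub i hx)
      exact exists_hasDerivAt_eq_zero (ht i.castSucc_lt_succ)
        (fun x hx => (hderiv x hx).continuousAt.continuousWithinAt) (by rw [h0, h0])
        (fun x hx => hderiv x (Ioo_subset_Icc_self hx))
    choose s hs hs0 using hrolle
    have hs_mono : StrictMono s := fun i j hij =>
      (hs i).2.trans ((ht.monotone (Fin.succ_le_castSucc_iff.2 hij)).trans_lt (hs j).1)
    have hs_sub : Icc (s 0) (s (Fin.last m)) ⊆ Icc (t 0) (t (Fin.last (m + 1))) :=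
      Icc_subset_Icc (hs 0).1.le (by simpa using (hs (Fin.last m)).2.le)
    rintro (_ | k) hk
    · exact ⟨t 0, left_mem_Icc.2 (ht.monotone (Fin.zero_le _)), h0 0⟩
    · obtain ⟨ξ, hξ, hξ0⟩ := ih (fun k => g (k + 1)) s hs_mono
        (fun k hk x hx => hg (k + 1) (by omega) x (hs_sub hx)) hs0 k (by omega)
      exact ⟨ξ, hs_sub hξ, hξ0⟩

theorem abs_iteratedDeriv_sub_eval_le_of_interpolates {f : ℝ → ℝ} {U s : Set ℝ} {n : ℕ}
    (hf : ContDiffOn ℝ (n + 1) f U) (hU : IsOpen U) (hs : Convex ℝ s) (hsU : s ⊆ U)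
    {p : ℝ[X]} (hp : p.natDegree ≤ n) {x : Fin (n + 1) → ℝ} (hx : StrictMono x)
    (hxs : ∀ i, x i ∈ s) (hinterp : ∀ i, p.eval (x i) = f (x i)) {L d : ℝ}
    (hL : ∀ y ∈ s, |iteratedDeriv (n + 1) f y| ≤ L) (hd : ∀ y ∈ s, ∀ y' ∈ s, |y - y'| ≤ d)
    {k : ℕ} (hk : k ≤ n) {y : ℝ} (hy : y ∈ s) :
    |iteratedDeriv k f y - (derivative^[k] p).eval y| ≤ L * d ^ (n + 1 - k) := by
  set E : ℕ → ℝ → ℝ := fun k y => iteratedDeriv k f y - (derivative^[k] p).eval y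
  have hE : ∀ k ≤ n, ∀ y ∈ s, HasDerivAt (E k) (E (k + 1) y) y := fun k hk y hy =>
    hf.hasDerivAt_iteratedDeriv_sub_eval hU (by exact_mod_cast Nat.lt_succ_of_le hk) p (hsU hy)
  have hIcc : Icc (x 0) (x (Fin.last n)) ⊆ s := hs.ordConnected.out (hxs 0) (hxs _)
  have hzero := exists_mem_Icc_eq_zero_of_hasDerivAt_chain E x hx
    (fun k hk y hy => hE k hk.le y (hIcc hy)) (fun i => by simp [E, hinterp])
  have hL0 : 0 ≤ L := (abs_nonneg _).trans (hL _ (hxs 0))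
  have hd0 : 0 ≤ d := (abs_nonneg _).trans (hd _ (hxs 0) _ (hxs 0))
  -- downward induction from `k = n + 1`, where `p^{(n+1)} = 0`
  suffices ∀ j ≤ n + 1, ∀ y ∈ s, |E (n + 1 - j) y| ≤ L * d ^ j by
    simpa [show n + 1 - (n + 1 - k) = k by omega] using this (n + 1 - k) (by omega) y hy
  intro j
  induction j with
  | zero =>
    intro _ y hy
    simpa [E, iterate_derivative_eq_zero (hp.trans_lt n.lt_succ_self)] using hL y hy
  | succ j ih =>
    intro hj y hy
    obtain ⟨ξ, hξ, hξ0⟩ := hzero (n - j) (by omega)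
    have hmvt := hs.norm_image_sub_le_of_norm_hasDerivWithin_le
      (fun y hy => (hE (n - j) (by omega) y hy).hasDerivWithinAt)
      (fun y hy => by rw [show n - j + 1 = n + 1 - j by omega]; exact ih (by omega) y hy)
      (hIcc hξ) hy
    rw [show n + 1 - (j + 1) = n - j by omega]
    calc |E (n - j) y| = ‖E (n - j) y - E (n - j) ξ‖ := by rw [hξ0, sub_zero, Real.norm_eq_abs]
      _ ≤ L * d ^ j * |y - ξ| := hmvt
      _ ≤ L * d ^ j * d :=
        mul_le_mul_of_nonneg_left (hd y hy ξ (hIcc hξ)) (mul_nonneg hL0 (pow_nonneg hd0 j))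
      _ = L * d ^ (j + 1) := by ring

theorem exists_forall_abs_add_mul_sub_le {ι : Type*} [Fintype ι] {z : ℝ} {zh : ℝ → ℝ}
    (hzh : (fun h => zh h - z) =O[𝓝[>] (0 : ℝ)] fun h => h) (a : ι → ℝ) :
    ∃ ρ, ∀ᶠ h in 𝓝[>] (0 : ℝ), ∀ i, |zh h + a i * h - z| ≤ ρ * h := by
  obtain ⟨c, hc⟩ := hzh.bound
  refine ⟨c + ∑ i, |a i|, ?_⟩
  filter_upwards [hc, self_mem_nhdsWithin] with h hch (hpos : 0 < h) i
  rw [Real.norm_eq_abs, Real.norm_eq_abs, abs_of_pos hpos] at hch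
  have hai : |a i| ≤ ∑ i, |a i| :=
    Finset.single_le_sum (fun i _ => abs_nonneg (a i)) (Finset.mem_univ i)
  calc |zh h + a i * h - z| = |(zh h - z) + a i * h| := by ring_nf
    _ ≤ |zh h - z| + |a i * h| := abs_add_le _ _
    _ = |zh h - z| + |a i| * h := by rw [abs_mul, abs_of_pos hpos]
    _ ≤ (c + ∑ i, |a i|) * h := by nlinarith

theorem isBigO_iteratedDeriv_sub_eval_interpolant {n : ℕ} {z : ℝ} {a : Fin (n + 1) → ℝ}
    (ha : StrictMono a) {f : ℝ → ℝ} {δ : ℝ} (hδ : 0 < δ)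
    (hf : ContDiffOn ℝ (n + 1) f (Metric.ball z δ)) {zh : ℝ → ℝ}
    (hzh : (fun h => zh h - z) =O[𝓝[>] (0 : ℝ)] fun h => h) {p : ℝ → ℝ[X]}
    (hdeg : ∀ h : ℝ, 0 < h → (p h).natDegree ≤ n)
    (hinterp : ∀ h : ℝ, 0 < h → ∀ i : Fin (n + 1),
      (p h).eval (zh h + a i * h) = f (zh h + a i * h))
    {k : ℕ} (hk : k ≤ n) :
    (fun h => iteratedDeriv k f z - (derivative^[k] (p h)).eval z) =O[𝓝[>] (0 : ℝ)]
      fun h => h ^ (n + 1 - k) := by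
  have hball : Metric.closedBall z (δ / 2) ⊆ Metric.ball z δ :=
    Metric.closedBall_subset_ball (by linarith)
  obtain ⟨L, hL⟩ := (isCompact_closedBall z (δ / 2)).exists_bound_of_continuousOn
    ((hf.continuousOn_iteratedDeriv_of_isOpen Metric.isOpen_ball
      (k := n + 1) (by norm_cast)).mono hball)
  obtain ⟨ρ, hρ⟩ := exists_forall_abs_add_mul_sub_le hzh a
  have hsmall : ∀ᶠ h in 𝓝[>] (0 : ℝ), ρ * h ≤ δ / 2 := by
    have : Tendsto (fun h : ℝ => ρ * h) (𝓝[>] 0) (𝓝 0) :=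
      ((continuous_const_mul ρ).tendsto' 0 0 (mul_zero ρ)).mono_left nhdsWithin_le_nhds
    exact this.eventually (ge_mem_nhds (by linarith))
  refine IsBigO.of_bound (L * (2 * ρ) ^ (n + 1 - k)) ?_
  filter_upwards [hρ, hsmall, self_mem_nhdsWithin] with h hnodes hh (hpos : 0 < h)
  have hsub : Metric.closedBall z (ρ * h) ⊆ Metric.closedBall z (δ / 2) :=
    Metric.closedBall_subset_closedBall hh
  have hdiam : ∀ y ∈ Metric.closedBall z (ρ * h), ∀ y' ∈ Metric.closedBall z (ρ * h),
      |y - y'| ≤ 2 * ρ * h := by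
    intro y hy y' hy'
    have := dist_triangle_right y y' z
    rw [Metric.mem_closedBall] at hy hy'
    rw [← Real.dist_eq]
    linarith
  have hbound := abs_iteratedDeriv_sub_eval_le_of_interpolates hf Metric.isOpen_ball
    (convex_closedBall z (ρ * h)) (hsub.trans hball) (hdeg h hpos)
    (x := fun i => zh h + a i * h)
    (fun i j hij => by simpa using mul_lt_mul_of_pos_right (ha hij) hpos)
    (fun i => by rw [Metric.mem_closedBall, Real.dist_eq]; exact hnodes i)
    (hinterp h hpos) (fun y hy => hL y (hsub hy)) hdiam hk
    (Metric.mem_closedBall_self ((abs_nonneg _).trans (hnodes 0)))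
  rw [Real.norm_eq_abs, Real.norm_eq_abs, abs_pow, abs_of_pos hpos, mul_assoc, ← mul_pow]
  simpa only [mul_assoc] using hbound

theorem factorial_mul_coeff_iterate_derivative_comp {R : Type*} [CommRing R] (p : R[X])
    (z h : R) (j k : ℕ) :
    (j.factorial : R) * (derivative^[k] (p.comp (C z + C h * X))).coeff j =
      h ^ (j + k) * (derivative^[j + k] p).eval z := by
  have hcomp : (C z + C h * X : R[X]) = (X + C z).comp (C h * X) := by simp [add_comm]
  have hfact : j.factorial * (j + k).descFactorial k = (j + k).factorial := by
    simpa using Nat.factorial_mul_descFactorial (Nat.le_add_left k j)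
  rw [coeff_iterate_derivative, nsmul_eq_mul, ← mul_assoc, ← Nat.cast_mul, hfact, hcomp,
    ← comp_assoc, comp_C_mul_X_coeff, ← taylor_apply, taylor_coeff,
    ← factorial_smul_hasseDeriv, LinearMap.smul_apply, eval_smul, nsmul_eq_mul]
  ring

theorem isBigO_coeff_iterate_derivative_comp {l : Filter ℝ} {q : ℝ → ℝ[X]} {z : ℝ}
    {j k m i : ℕ} (hjk : j + k = m)
    (hq : (fun h => (derivative^[m] (q h)).eval z) =O[l] fun h => h ^ i) :
    (fun h => (derivative^[k] ((q h).comp (C z + C h * X))).coeff j) =O[l]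
      fun h => h ^ (m + i) := by
  refine (((isBigO_refl (fun h : ℝ => h ^ m) l).mul hq).const_mul_left
    (j.factorial : ℝ)⁻¹).congr (fun h => ?_) (fun h => (pow_add h m i).symm)
  have hj : (j.factorial : ℝ) ≠ 0 := Nat.cast_ne_zero.2 j.factorial_ne_zero
  rw [← hjk, ← factorial_mul_coeff_iterate_derivative_comp, inv_mul_cancel_left₀ hj]

theorem isBigO_sq_sub_four_mul_mul {l : Filter ℝ} (hl : l ≤ 𝓝 0) {A B C : ℝ → ℝ} {n : ℕ}
    (hA : A =O[l] fun h => h ^ n) (hB : B =O[l] fun h => h ^ (n + 1))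
    (hC : C =O[l] fun h => h ^ (n + 1)) :
    (fun h => B h ^ 2 - 4 * A h * C h) =O[l] fun h => h ^ (2 * n + 1) := by
  have hB2 : (fun h => B h ^ 2) =O[l] fun h => h ^ (2 * n + 1) := by
    refine (hB.pow 2).trans ?_
    have := (isBigO_refl (fun h : ℝ => h ^ (2 * n + 1)) l).mul
      ((tendsto_id.mono_left hl).isBigO_one ℝ (c := (0 : ℝ)))
    exact this.congr (fun h => by simp only [id]; ring) (fun h => mul_one _)
  have hAC : (fun h => 4 * A h * C h) =O[l] fun h => h ^ (2 * n + 1) :=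
    ((hA.mul hC).const_mul_left 4).congr (fun h => by ring) (fun h => by ring)
  exact hB2.sub hAC

theorem discriminant_near_high_order_critical_point_general
    (n : ℕ) (hn : 3 ≤ n) (z : ℝ) (a : Fin (n + 1) → ℝ) (ha : StrictMono a)
    (f : ℝ → ℝ) (δ : ℝ) (hδ : 0 < δ) (hf : ContDiffOn ℝ (n + 1) f (Metric.ball z δ))
    (hcrit : ∀ l : ℕ, 1 ≤ l → l ≤ n - 1 → iteratedDeriv l f z = 0)
    (zh : ℝ → ℝ) (hzh : (fun h => zh h - z) =O[𝓝[>] (0 : ℝ)] fun h => h)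
    (p : ℝ → Polynomial ℝ)
    (hdeg : ∀ h : ℝ, 0 < h → (p h).natDegree ≤ n)
    (hinterp : ∀ h : ℝ, 0 < h → ∀ i : Fin (n + 1),
      (p h).eval (zh h + a i * h) = f (zh h + a i * h))
    (A B C : ℝ → ℝ)
    (hA : ∀ h, A h = (Polynomial.derivative^[n - 2]
      ((p h).comp (Polynomial.C z + Polynomial.C h * Polynomial.X))).coeff 2)
    (hB : ∀ h, B h = (Polynomial.derivative^[n - 2]
      ((p h).comp (Polynomial.C z + Polynomial.C h * Polynomial.X))).coeff 1)
    (hC : ∀ h, C h = (Polynomial.derivative^[n - 2]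
      ((p h).comp (Polynomial.C z + Polynomial.C h * Polynomial.X))).coeff 0) :
    (fun h => B h ^ 2 - 4 * A h * C h) =O[𝓝[>] (0 : ℝ)] fun h => h ^ (2 * n + 1) := by
  have hrate : ∀ k ≤ n, (fun h => iteratedDeriv k f z - (derivative^[k] (p h)).eval z)
      =O[𝓝[>] (0 : ℝ)] fun h => h ^ (n + 1 - k) := fun k hk =>
    isBigO_iteratedDeriv_sub_eval_interpolant ha hδ hf hzh hdeg hinterp hk
  have hDn : (fun h => (derivative^[n] (p h)).eval z) =O[𝓝[>] (0 : ℝ)] fun h => h ^ 0 := by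
    have hpow : (fun h : ℝ => h ^ (n + 1 - n)) =O[𝓝[>] (0 : ℝ)] fun _ => (1 : ℝ) :=
      ((continuous_pow _).tendsto' 0 0 (by simp)).mono_left nhdsWithin_le_nhds |>.isBigO_one ℝ
    exact ((isBigO_const_one ℝ (iteratedDeriv n f z) _).sub ((hrate n le_rfl).trans hpow))
      |>.congr (fun h => sub_sub_cancel _ _) (fun h => (pow_zero h).symm)
  have hDn1 : (fun h => (derivative^[n - 1] (p h)).eval z) =O[𝓝[>] (0 : ℝ)]
      fun h => h ^ 2 := by
    simpa [hcrit (n - 1) (by omega) le_rfl, show n + 1 - (n - 1) = 2 by omega]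
      using hrate (n - 1) (by omega)
  have hDn2 : (fun h => (derivative^[n - 2] (p h)).eval z) =O[𝓝[>] (0 : ℝ)]
      fun h => h ^ 3 := by
    simpa [hcrit (n - 2) (by omega) (by omega), show n + 1 - (n - 2) = 3 by omega]
      using hrate (n - 2) (by omega)
  simp only [hA, hB, hC]
  refine isBigO_sq_sub_four_mul_mul nhdsWithin_le_nhds
    (isBigO_coeff_iterate_derivative_comp (by omega) hDn) ?_ ?_
  · simpa [show n - 1 + 2 = n + 1 by omega] using
      isBigO_coeff_iterate_derivative_comp (by omega) hDn1
  · simpa [show n - 2 + 3 = n + 1 by omega] using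
      isBigO_coeff_iterate_derivative_comp (by omega) hDn2

/-- Near a critical point of order `n-1`, the discriminant of the quadratic
`(n-2)`-th derivative of the rescaled interpolation polynomial is `O(h^{2n+1})`. -/
theorem discriminant_near_high_order_critical_point
    (n : ℕ) (hn : 3 ≤ n) (z : ℝ) (a : Fin (n + 1) → ℝ) (ha : StrictMono a)
    (f : ℝ → ℝ) (δ : ℝ) (hδ : 0 < δ) (hf : ContDiffOn ℝ (n + 1) f (Metric.ball z δ))
    (hcrit : ∀ l : ℕ, 1 ≤ l → l ≤ n - 1 → iteratedDeriv l f z = 0)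
    (hn0 : iteratedDeriv n f z ≠ 0)
    (zh : ℝ → ℝ) (hzh : (fun h => zh h - z) =O[𝓝[>] (0 : ℝ)] fun h => h)
    (p : ℝ → Polynomial ℝ)
    (hdeg : ∀ h : ℝ, 0 < h → (p h).natDegree ≤ n)
    (hinterp : ∀ h : ℝ, 0 < h → ∀ i : Fin (n + 1),
      (p h).eval (zh h + a i * h) = f (zh h + a i * h))
    (A B C : ℝ → ℝ)
    (hA : ∀ h, A h = (Polynomial.derivative^[n - 2]
      ((p h).comp (Polynomial.C z + Polynomial.C h * Polynomial.X))).coeff 2)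
    (hB : ∀ h, B h = (Polynomial.derivative^[n - 2]
      ((p h).comp (Polynomial.C z + Polynomial.C h * Polynomial.X))).coeff 1)
    (hC : ∀ h, C h = (Polynomial.derivative^[n - 2]
      ((p h).comp (Polynomial.C z + Polynomial.C h * Polynomial.X))).coeff 0) :
    (fun h => B h ^ 2 - 4 * A h * C h) =O[𝓝[>] (0 : ℝ)] fun h => h ^ (2 * n + 1) :=
  discriminant_near_high_order_critical_point_general n hn z a ha f δ hδ hf hcrit zh hzh p hdeg
    hinterp A B C hA hB hC
end

section
/- Let n ≥ 3, let f be continuous on (z−δ, z)∪(z, z+δ) with one-sided limits f(z⁻) = f_L ≠ f_R = f(z⁺), and suppose f(z) ∈ {f_L, f_R}. Let x_{i,h} = z + a_i h with a₀ < ⋯ < a_n, and suppose a_{i₀} ≤ 0 < a_{i₀+1} (appropriately for the value of f(z)) so that the stencil straddles z for all small h. Let Δ_n(f₀,…,f_n) := B² − 4AC be the discriminant of the (n−2)-th derivative of the rescaled interpolating polynomial of the data (f₀,…,f_n). Then Δ_n(f(x_{0,h}),…,f(x_{n,h})) = Ō(1), i.e., as h → 0⁺ it is bounded and bounded away from 0.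 -/
/-!
For `h > 0` the rescaled interpolant `w ↦ p(z + w h)` is the Lagrange interpolant on the fixed
nodes `a i` of the data `f(z + a i h)`, so `D h = Δ_n(f(z + a₀ h), …, f(z + aₙ h))` with `Δ_n`
continuous, and the data tend to the step data `(f_L, …, f_L, f_R, …, f_R)` as `h → 0⁺`.
For the step data the interpolant `P` takes equal values at consecutive nodes except across the
jump, so Rolle gives `n - 1` distinct real zeros of `P'`, which has degree `≤ n - 1`. Repeated
Rolle keeps all zeros real and simple, so `P⁽ⁿ⁻²⁾` is a quadratic with two distinct real zeros
and `Δ_n` of the step data is positive; hence `D h` is eventually between half and twice it.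
-/

open Polynomial Filter Topology Set

namespace Polynomial

def quadDiscrim {R : Type*} [Ring R] (Q : R[X]) : R := discrim (Q.coeff 2) (Q.coeff 1) (Q.coeff 0)

lemma card_roots_toFinset_le_natDegree {R : Type*} [CommRing R] [IsDomain R] [DecidableEq R]
    (p : R[X]) : p.roots.toFinset.card ≤ p.natDegree :=
  (Multiset.toFinset_card_le _).trans (card_roots' p)

/-- `p.roots.toFinset.card = p.natDegree` says that `p` splits over `ℝ` with simple roots;
by Rolle's theorem this passes to `derivative p`. -/
lemma card_roots_toFinset_derivative_eq {p : ℝ[X]} (hp : p.roots.toFinset.card = p.natDegree) :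
    (derivative p).roots.toFinset.card = (derivative p).natDegree ∧
      (derivative p).natDegree = p.natDegree - 1 := by
  have h₁ := card_roots_toFinset_le_derivative p
  have h₂ := card_roots_toFinset_le_natDegree (derivative p)
  have h₃ := natDegree_derivative_le p
  omega

lemma card_roots_toFinset_iterate_derivative_eq {p : ℝ[X]}
    (hp : p.roots.toFinset.card = p.natDegree) (k : ℕ) :
    (derivative^[k] p).roots.toFinset.card = (derivative^[k] p).natDegree ∧
      (derivative^[k] p).natDegree = p.natDegree - k := by
  induction k with
  | zero => exact ⟨hp, rfl⟩
  | succ k ih =>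
    rw [Function.iterate_succ_apply']
    obtain ⟨hcard, hdeg⟩ := card_roots_toFinset_derivative_eq ih.1
    exact ⟨hcard, by omega⟩

lemma quadDiscrim_pos {Q : ℝ[X]} (hdeg : Q.natDegree = 2) (hroots : Q.roots.toFinset.card = 2) :
    0 < Q.quadDiscrim := by
  have hQ : Q ≠ 0 := by rintro rfl; simp at hdeg
  have ha : Q.coeff 2 ≠ 0 := by
    rw [← hdeg]; exact leadingCoeff_ne_zero.2 hQ
  have heval : ∀ x, Q.eval x = Q.coeff 2 * (x * x) + Q.coeff 1 * x + Q.coeff 0 := by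
    intro x
    rw [eval_eq_sum_range, hdeg]
    simp only [Finset.sum_range_succ, Finset.range_one, Finset.sum_singleton, pow_zero, mul_one,
      pow_one]
    ring
  obtain ⟨r₁, r₂, hne, hr₁₂⟩ := Finset.card_eq_two.1 hroots
  have hroot : ∀ r ∈ Q.roots.toFinset, Q.coeff 2 * (r * r) + Q.coeff 1 * r + Q.coeff 0 = 0 := by
    intro r hr
    rw [← heval]
    exact (mem_roots hQ).1 (Multiset.mem_toFinset.1 hr)
  refine lt_of_le_of_ne ?_ fun h0 => hne ?_
  · rw [quadDiscrim, discrim_eq_sq_of_quadratic_eq_zero (hroot r₁ (by simp [hr₁₂]))]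
    exact sq_nonneg _
  · have hdiscr := (quadratic_eq_zero_iff_of_discrim_eq_zero ha h0.symm)
    rw [(hdiscr r₁).1 (hroot r₁ (by simp [hr₁₂])), (hdiscr r₂).1 (hroot r₂ (by simp [hr₁₂]))]

lemma card_le_card_roots_toFinset_derivative_s12 {m : ℕ} {P : ℝ[X]} (hP : derivative P ≠ 0)
    {x : Fin (m + 1) → ℝ} (hx : StrictMono x) (S : Finset (Fin m))
    (hS : ∀ j ∈ S, P.eval (x j.castSucc) = P.eval (x j.succ)) :
    S.card ≤ (derivative P).roots.toFinset.card := by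
  have hrolle : ∀ j : Fin m, ∃ r ∈ Ioo (x j.castSucc) (x j.succ),
      P.eval (x j.castSucc) = P.eval (x j.succ) → (derivative P).eval r = 0 := by
    intro j
    have hlt := hx (Fin.castSucc_lt_succ (i := j))
    by_cases heq : P.eval (x j.castSucc) = P.eval (x j.succ)
    · obtain ⟨r, hr, hr'⟩ := exists_deriv_eq_zero hlt P.continuousOn heq
      exact ⟨r, hr, fun _ => by rwa [Polynomial.deriv] at hr'⟩
    · obtain ⟨r, hr⟩ := nonempty_Ioo.2 hlt
      exact ⟨r, hr, fun h => absurd h heq⟩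
  choose r hr hroot using hrolle
  have hmono : StrictMono r := fun i j hij =>
    calc r i < x i.succ := (hr i).2
      _ ≤ x j.castSucc := hx.monotone (Fin.succ_le_castSucc_iff.2 hij)
      _ < r j := (hr j).1
  rw [← Finset.card_image_of_injective S hmono.injective]
  refine Finset.card_le_card fun y hy => ?_
  obtain ⟨j, hj, rfl⟩ := Finset.mem_image.1 hy
  exact Multiset.mem_toFinset.2 ((mem_roots hP).2 (hroot j (hS j hj)))

end Polynomial

lemma natDegree_interpolate_le {F : Type*} [Field F] {n : ℕ} {a : Fin (n + 1) → F}
    (ha : Function.Injective a) (v : Fin (n + 1) → F) :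
    (Lagrange.interpolate Finset.univ a v).natDegree ≤ n := by
  have hlt := Lagrange.degree_interpolate_lt (s := Finset.univ) (r := v) ha.injOn
  rw [Finset.card_univ, Fintype.card_fin] at hlt
  by_cases h0 : Lagrange.interpolate Finset.univ a v = 0
  · simp [h0]
  · exact Nat.lt_succ_iff.1 ((natDegree_lt_iff_degree_lt h0).2 hlt)

lemma comp_affine_eq_interpolate {F : Type*} [Field F] {n : ℕ} {p : F[X]} (hp : p.natDegree ≤ n)
    {a : Fin (n + 1) → F} (ha : Function.Injective a) {z h : F} {y : Fin (n + 1) → F}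
    (hy : ∀ i, p.eval (z + a i * h) = y i) :
    p.comp (C z + C h * X) = Lagrange.interpolate Finset.univ a y := by
  refine Lagrange.eq_interpolate_of_eval_eq _ ha.injOn ?_ fun i _ => ?_
  · have hdeg : (p.comp (C z + C h * X)).natDegree ≤ n :=
      natDegree_comp_le.trans <|
        (Nat.mul_le_mul hp (by rw [add_comm]; exact natDegree_linear_le)).trans_eq (mul_one n)
    rw [Finset.card_univ, Fintype.card_fin]
    exact degree_le_natDegree.trans_lt (by exact_mod_cast Nat.lt_succ_of_le hdeg)
  · rw [← hy, eval_comp]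
    simp only [eval_add, eval_C, eval_mul, eval_X, mul_comm h]

lemma tendsto_add_mul_nhdsGT_of_pos (z : ℝ) {c : ℝ} (hc : 0 < c) :
    Tendsto (fun h => z + c * h) (𝓝[>] 0) (𝓝[>] z) := by
  refine tendsto_nhdsWithin_of_tendsto_nhds_of_eventually_within _ ?_ ?_
  · exact ((continuous_const.add (continuous_const_mul c)).tendsto' 0 z (by simp)).mono_left
      nhdsWithin_le_nhds
  · filter_upwards [self_mem_nhdsWithin] with h hh
    exact lt_add_of_pos_right z (mul_pos hc hh)

lemma tendsto_add_mul_nhdsGT_of_neg (z : ℝ) {c : ℝ} (hc : c < 0) :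
    Tendsto (fun h => z + c * h) (𝓝[>] 0) (𝓝[<] z) := by
  refine tendsto_nhdsWithin_of_tendsto_nhds_of_eventually_within _ ?_ ?_
  · exact ((continuous_const.add (continuous_const_mul c)).tendsto' 0 z (by simp)).mono_left
      nhdsWithin_le_nhds
  · filter_upwards [self_mem_nhdsWithin] with h hh
    exact add_lt_of_neg_right z (mul_neg_of_neg_of_pos hc hh)

lemma exists_bounds_of_tendsto_nhdsGT_pos {D : ℝ → ℝ} {L : ℝ} (hD : Tendsto D (𝓝[>] 0) (𝓝 L))
    (hL : 0 < L) : ∃ c C h₀ : ℝ, 0 < c ∧ 0 < h₀ ∧ ∀ h : ℝ, 0 < h → h < h₀ →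
      c ≤ |D h| ∧ |D h| ≤ C := by
  have hev : ∀ᶠ h in 𝓝[>] 0, D h ∈ Ioo (L / 2) (2 * L) :=
    hD (Ioo_mem_nhds (by linarith) (by linarith))
  obtain ⟨h₀, hh₀, hsub⟩ := mem_nhdsGT_iff_exists_Ioo_subset.1 hev
  refine ⟨L / 2, 2 * L, h₀, by positivity, hh₀, fun h hpos hlt => ?_⟩
  obtain ⟨hlo, hhi⟩ := hsub ⟨hpos, hlt⟩
  rw [abs_of_pos (by linarith)]
  exact ⟨hlo.le, hhi.le⟩

section Interpolation

variable {n : ℕ}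

def stepData (i₀ : Fin n) (fL fR : ℝ) (i : Fin (n + 1)) : ℝ := if i ≤ i₀.castSucc then fL else fR

/-- The paper's `Δ_n(v₀, …, vₙ)` for the rescaled nodes `a`. -/
noncomputable def interpDiscrim (a v : Fin (n + 1) → ℝ) : ℝ :=
  (derivative^[n - 2] (Lagrange.interpolate Finset.univ a v)).quadDiscrim

lemma continuous_interpDiscrim (a : Fin (n + 1) → ℝ) : Continuous (interpDiscrim a) := by
  have hcoeff : ∀ k, Continuous fun v =>
      (derivative^[n - 2] (Lagrange.interpolate Finset.univ a v)).coeff k :=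
    fun k => ((lcoeff ℝ k).comp ((derivative ^ (n - 2)).comp
      (Lagrange.interpolate Finset.univ a))).continuous_of_finiteDimensional.congr
        fun v => by simp only [LinearMap.comp_apply, lcoeff_apply, Module.End.pow_apply]
  exact ((hcoeff 1).pow 2).sub ((continuous_const.mul (hcoeff 2)).mul (hcoeff 0))

lemma stepData_castSucc_eq_succ {i₀ j : Fin n} (hj : j ≠ i₀) (fL fR : ℝ) :
    stepData i₀ fL fR j.castSucc = stepData i₀ fL fR j.succ := by
  simp only [stepData, Fin.castSucc_le_castSucc_iff, Fin.succ_le_castSucc_iff]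
  simp only [le_iff_lt_or_eq, hj, or_false]

lemma card_roots_toFinset_derivative_interpolate_stepData {a : Fin (n + 1) → ℝ}
    (ha : StrictMono a) (i₀ : Fin n) {fL fR : ℝ} (hjump : fL ≠ fR) :
    let P := Lagrange.interpolate Finset.univ a (stepData i₀ fL fR)
    (derivative P).roots.toFinset.card = (derivative P).natDegree ∧
      (derivative P).natDegree = n - 1 := by
  intro P
  have hnode : ∀ i, P.eval (a i) = stepData i₀ fL fR i := fun i =>
    Lagrange.eval_interpolate_at_node _ ha.injective.injOn (Finset.mem_univ i)
  have hP' : derivative P ≠ 0 := by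
    intro h0
    have hleft := hnode i₀.castSucc
    have hright := hnode i₀.succ
    rw [eq_C_of_derivative_eq_zero h0, eval_C] at hleft hright
    simp only [stepData, le_refl, Fin.succ_le_castSucc_iff, lt_irrefl, if_true, if_false]
      at hleft hright
    exact hjump (hleft.symm.trans hright)
  have hroots : n - 1 ≤ (derivative P).roots.toFinset.card := by
    have := card_le_card_roots_toFinset_derivative_s12 hP' ha (Finset.univ.erase i₀)
      fun j hj => by rw [hnode, hnode, stepData_castSucc_eq_succ (Finset.ne_of_mem_erase hj)]
    simpa using this
  have := card_roots_toFinset_le_natDegree (derivative P)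
  have := natDegree_derivative_le P
  have : P.natDegree ≤ n := natDegree_interpolate_le ha.injective _
  omega

lemma interpDiscrim_stepData_pos (hn : 3 ≤ n) {a : Fin (n + 1) → ℝ} (ha : StrictMono a)
    (i₀ : Fin n) {fL fR : ℝ} (hjump : fL ≠ fR) :
    0 < interpDiscrim a (stepData i₀ fL fR) := by
  obtain ⟨hsimple, hdeg'⟩ := card_roots_toFinset_derivative_interpolate_stepData ha i₀ hjump
  obtain ⟨hcard, hdeg⟩ := card_roots_toFinset_iterate_derivative_eq hsimple (n - 3)
  rw [interpDiscrim, show n - 2 = n - 3 + 1 by omega, Function.iterate_succ_apply]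
  exact quadDiscrim_pos (by omega) (by omega)

lemma tendsto_stencil_stepData {a : Fin (n + 1) → ℝ} (ha : Monotone a) {f : ℝ → ℝ}
    {z fL fR : ℝ} (hL : Tendsto f (𝓝[<] z) (𝓝 fL)) (hR : Tendsto f (𝓝[>] z) (𝓝 fR)) {i₀ : Fin n}
    (hstraddle : (f z = fL ∧ a i₀.castSucc ≤ 0 ∧ 0 < a i₀.succ) ∨
                 (f z = fR ∧ a i₀.castSucc < 0 ∧ 0 ≤ a i₀.succ)) :
    Tendsto (fun h i => f (z + a i * h)) (𝓝[>] 0) (𝓝 (stepData i₀ fL fR)) := by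
  have hneg : ∀ {c}, c < 0 → Tendsto (fun h => f (z + c * h)) (𝓝[>] 0) (𝓝 fL) :=
    fun hc => hL.comp (tendsto_add_mul_nhdsGT_of_neg z hc)
  have hpos : ∀ {c}, 0 < c → Tendsto (fun h => f (z + c * h)) (𝓝[>] 0) (𝓝 fR) :=
    fun hc => hR.comp (tendsto_add_mul_nhdsGT_of_pos z hc)
  have hzero : Tendsto (fun h => f (z + 0 * h)) (𝓝[>] 0) (𝓝 (f z)) := by simp
  rw [tendsto_pi_nhds]
  intro i
  simp only [stepData]
  split_ifs with hi
  · have hai := ha hi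
    rcases hstraddle with ⟨hfz, h0, -⟩ | ⟨-, h0, -⟩
    · rcases (hai.trans h0).lt_or_eq with hlt | heq
      · exact hneg hlt
      · rw [heq, ← hfz]; exact hzero
    · exact hneg (hai.trans_lt h0)
  · have hai := ha (Fin.castSucc_lt_iff_succ_le.1 (not_le.1 hi))
    rcases hstraddle with ⟨-, -, h0⟩ | ⟨hfz, -, h0⟩
    · exact hpos (h0.trans_le hai)
    · rcases (h0.trans hai).lt_or_eq with hlt | heq
      · exact hpos hlt
      · rw [← heq, ← hfz]; exact hzero

end Interpolation

theorem discriminant_at_jump_barO_one_general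
    (n : ℕ) (hn : 3 ≤ n) (z : ℝ) (a : Fin (n + 1) → ℝ) (ha : StrictMono a)
    (f : ℝ → ℝ)
    (fL fR : ℝ) (hjump : fL ≠ fR)
    (hL : Tendsto f (𝓝[<] z) (𝓝 fL)) (hR : Tendsto f (𝓝[>] z) (𝓝 fR))
    (i₀ : Fin n)
    (hstraddle : (f z = fL ∧ a i₀.castSucc ≤ 0 ∧ 0 < a i₀.succ) ∨
                 (f z = fR ∧ a i₀.castSucc < 0 ∧ 0 ≤ a i₀.succ))
    (p : ℝ → Polynomial ℝ)
    (hdeg : ∀ h : ℝ, 0 < h → (p h).natDegree ≤ n)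
    (hinterp : ∀ h : ℝ, 0 < h → ∀ i : Fin (n + 1),
      (p h).eval (z + a i * h) = f (z + a i * h))
    (D : ℝ → ℝ)
    (hD : ∀ h, D h =
      (Polynomial.derivative^[n - 2]
        ((p h).comp (Polynomial.C z + Polynomial.C h * Polynomial.X))).coeff 1 ^ 2 -
      4 * (Polynomial.derivative^[n - 2]
        ((p h).comp (Polynomial.C z + Polynomial.C h * Polynomial.X))).coeff 2 *
        (Polynomial.derivative^[n - 2]
        ((p h).comp (Polynomial.C z + Polynomial.C h * Polynomial.X))).coeff 0) :
    ∃ c C h₀ : ℝ, 0 < c ∧ 0 < h₀ ∧ ∀ h : ℝ, 0 < h → h < h₀ →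
      c ≤ |D h| ∧ |D h| ≤ C := by
  have hD_eq : ∀ h, 0 < h → D h = interpDiscrim a fun i => f (z + a i * h) := fun h hh => by
    rw [hD, comp_affine_eq_interpolate (hdeg h hh) ha.injective (hinterp h hh)]
    rfl
  have hlim : Tendsto D (𝓝[>] 0) (𝓝 (interpDiscrim a (stepData i₀ fL fR))) :=
    (((continuous_interpDiscrim a).tendsto _).comp (tendsto_stencil_stepData ha.monotone hL hR
      hstraddle)).congr' (eventually_nhdsWithin_of_forall fun h hh => (hD_eq h hh).symm)
  exact exists_bounds_of_tendsto_nhdsGT_pos hlim (interpDiscrim_stepData_pos hn ha i₀ hjump)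

/-- At a jump discontinuity straddled by the stencil, the discriminant `Δ_n` of the
`(n-2)`-th derivative of the rescaled interpolation polynomial is `Ō(1)` as `h → 0⁺`:
bounded and bounded away from zero. -/
theorem discriminant_at_jump_barO_one
    (n : ℕ) (hn : 3 ≤ n) (z : ℝ) (a : Fin (n + 1) → ℝ) (ha : StrictMono a)
    (f : ℝ → ℝ) (δ : ℝ) (hδ : 0 < δ)
    (hfc : ContinuousOn f ((Set.Ioo (z - δ) (z + δ)) \ {z}))
    (fL fR : ℝ) (hjump : fL ≠ fR)
    (hL : Tendsto f (𝓝[<] z) (𝓝 fL)) (hR : Tendsto f (𝓝[>] z) (𝓝 fR))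
    (i₀ : Fin n)
    (hstraddle : (f z = fL ∧ a i₀.castSucc ≤ 0 ∧ 0 < a i₀.succ) ∨
                 (f z = fR ∧ a i₀.castSucc < 0 ∧ 0 ≤ a i₀.succ))
    (p : ℝ → Polynomial ℝ)
    (hdeg : ∀ h : ℝ, 0 < h → (p h).natDegree ≤ n)
    (hinterp : ∀ h : ℝ, 0 < h → ∀ i : Fin (n + 1),
      (p h).eval (z + a i * h) = f (z + a i * h))
    (D : ℝ → ℝ)
    (hD : ∀ h, D h =
      (Polynomial.derivative^[n - 2]
        ((p h).comp (Polynomial.C z + Polynomial.C h * Polynomial.X))).coeff 1 ^ 2 -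
      4 * (Polynomial.derivative^[n - 2]
        ((p h).comp (Polynomial.C z + Polynomial.C h * Polynomial.X))).coeff 2 *
        (Polynomial.derivative^[n - 2]
        ((p h).comp (Polynomial.C z + Polynomial.C h * Polynomial.X))).coeff 0) :
    ∃ c C h₀ : ℝ, 0 < c ∧ 0 < h₀ ∧ ∀ h : ℝ, 0 < h → h < h₀ →
      c ≤ |D h| ∧ |D h| ≤ C :=
  discriminant_at_jump_barO_one_general n hn z a ha f fL fR hjump hL hR i₀ hstraddle p hdeg hinterp
    D hD
end

section
/- Let f be smooth near z with f^{(s')}(z) = 0 for all 1 ≤ s' < s (where s ≥ r). Let p_i be the degree-(r−1) polynomial interpolating f at the r equally spaced nodes x_{−r+1+i}, …, x_i with x_j = z + jh. Then f(z + h/2) − p_i(z + h/2) = O(h^s) as h → 0⁺. -/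
open Polynomial Asymptotics Filter Topology Metric

lemma bigO_of_iteratedDeriv_zero : ∀ (n : ℕ) (g : ℝ → ℝ) (ε : ℝ), 0 < ε →
    ContDiffOn ℝ (⊤ : ℕ∞) g (ball (0:ℝ) ε) → (∀ k < n, iteratedDeriv k g 0 = 0) →
    g =O[𝓝 (0:ℝ)] fun u => u ^ n := by
  intro n
  induction n with
  | zero =>
    intro g ε hε hg _
    simp only [pow_zero]
    have hc : ContinuousAt g 0 :=
      (hg.continuousOn.continuousAt (isOpen_ball.mem_nhds (by simp [hε])))
    exact hc.isBigO_one ℝ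
  | succ n IH =>
    intro g ε hε hg hz
    have hg' : ContDiffOn ℝ (⊤ : ℕ∞) (deriv g) (ball (0:ℝ) ε) :=
      hg.deriv_of_isOpen isOpen_ball (by simp)
    have hz' : ∀ k < n, iteratedDeriv k (deriv g) 0 = 0 := by
      intro k hk
      rw [← iteratedDeriv_succ']
      exact hz (k+1) (Nat.succ_lt_succ hk)
    obtain ⟨C, hC0, hCb⟩ := (IH (deriv g) ε hε hg' hz').exists_pos
    rw [IsBigOWith] at hCb
    obtain ⟨ε', hε', hball⟩ := Metric.eventually_nhds_iff.mp hCb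
    rw [isBigO_iff]
    refine ⟨C, Metric.eventually_nhds_iff.mpr ⟨min ε' ε, by positivity, ?_⟩⟩
    intro u hu
    rw [Real.dist_eq, sub_zero] at hu
    have hu' : |u| < ε' := lt_of_lt_of_le hu (min_le_left _ _)
    have huε : |u| < ε := lt_of_lt_of_le hu (min_le_right _ _)
    have hg0 : g 0 = 0 := by simpa using hz 0 (Nat.succ_pos n)
    have hseg : ∀ x ∈ segment ℝ (0:ℝ) u, |x| ≤ |u| := by
      rintro x ⟨a, b, ha, hb, hab, rfl⟩
      simp only [smul_eq_mul, mul_zero, zero_add]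
      calc |b * u| = b * |u| := by rw [abs_mul, abs_of_nonneg hb]
        _ ≤ 1 * |u| := mul_le_mul_of_nonneg_right (by linarith) (abs_nonneg u)
        _ = |u| := one_mul _
    have key : ‖g u - g 0‖ ≤ (C * |u| ^ n) * ‖u - 0‖ := by
      apply Convex.norm_image_sub_le_of_norm_deriv_le
        (f := g) (s := segment ℝ (0:ℝ) u)
        ?_ ?_ (convex_segment _ _) (left_mem_segment _ _ _) (right_mem_segment _ _ _)
      · intro x hx
        have hxb : x ∈ ball (0:ℝ) ε := by
          rw [mem_ball, Real.dist_eq, sub_zero]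
          exact lt_of_le_of_lt (hseg x hx) huε
        exact ((hg.contDiffAt (isOpen_ball.mem_nhds hxb)).differentiableAt (by simp))
      · intro x hx
        have hx' : dist x 0 < ε' := by
          rw [Real.dist_eq, sub_zero]; exact lt_of_le_of_lt (hseg x hx) hu'
        calc ‖deriv g x‖ ≤ C * ‖x ^ n‖ := hball hx'
          _ = C * |x| ^ n := by rw [Real.norm_eq_abs, abs_pow]
          _ ≤ C * |u| ^ n := by
              exact mul_le_mul_of_nonneg_left
                (pow_le_pow_left₀ (abs_nonneg _) (hseg x hx) n) hC0.le
    rw [hg0, sub_zero, sub_zero] at key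
    calc ‖g u‖ ≤ C * |u| ^ n * ‖u‖ := key
      _ = C * ‖u ^ (n+1)‖ := by
          rw [Real.norm_eq_abs, Real.norm_eq_abs, abs_pow, pow_succ]; ring

/-- The (real) node coefficient `i + 1 - r + l`. -/
def nodeC (r i : ℕ) (l : Fin r) : ℝ := (((i : ℤ) + 1 - (r : ℤ) + (l : ℤ) : ℤ) : ℝ)

/-- Interpolation error at a critical point of order `s-1 ≥ r-1`: if `f` is smooth near
`z` with `f^{(s')}(z) = 0` for `1 ≤ s' < s` (`s ≥ r`), then for the degree-`(r-1)`
interpolant `p_i` of `f` at the nodes `x_{-r+1+i}, …, x_i` (with `x_j = z + j h`),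
`f(z + h/2) - p_i(z + h/2) = O(h^s)`. -/
theorem interpolation_error_critical_point
    (r : ℕ) (hr : 1 ≤ r) (s : ℕ) (hs : r ≤ s) (z : ℝ)
    (f : ℝ → ℝ) (δ : ℝ) (hδ : 0 < δ) (hf : ContDiffOn ℝ (⊤ : ℕ∞) f (Metric.ball z δ))
    (hcrit : ∀ s' : ℕ, 1 ≤ s' → s' < s → iteratedDeriv s' f z = 0)
    (i : ℕ) (hi : i ≤ r - 1)
    (p : ℝ → Polynomial ℝ)
    (hdeg : ∀ h : ℝ, 0 < h → (p h).natDegree ≤ r - 1)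
    (hinterp : ∀ h : ℝ, 0 < h → ∀ l : Fin r,
      (p h).eval (z + (((i : ℤ) + 1 - (r : ℤ) + (l : ℤ) : ℤ) : ℝ) * h) =
        f (z + (((i : ℤ) + 1 - (r : ℤ) + (l : ℤ) : ℤ) : ℝ) * h)) :
    (fun h : ℝ => f (z + h / 2) - (p h).eval (z + h / 2))
      =O[𝓝[>] (0 : ℝ)] fun h => h ^ s := by
  classical
  set c : Fin r → ℝ := nodeC r i with hcdef
  -- injectivity of the node map
  have hcinj : Function.Injective c := by
    intro a b hab
    have h1 : ((i : ℤ) + 1 - (r : ℤ) + (a : ℤ)) = ((i : ℤ) + 1 - (r : ℤ) + (b : ℤ)) :=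
      Int.cast_injective hab
    have h2 : (a : ℤ) = (b : ℤ) := by omega
    exact Fin.ext (by exact_mod_cast h2)
  have hvinj : ∀ h : ℝ, h ≠ 0 →
      Set.InjOn (fun l : Fin r => z + c l * h) (Finset.univ : Finset (Fin r)) := by
    intro h hne a _ b _ hab
    apply hcinj
    have : c a * h = c b * h := by simpa using hab
    exact mul_right_cancel₀ hne this
  -- the h-independent weights
  set w : Fin r → ℝ :=
    fun l => ∏ j ∈ Finset.univ.erase l, ((c l - c j)⁻¹ * (1/2 - c j)) with hwdef
  have hbasis : ∀ h : ℝ, h ≠ 0 → ∀ l : Fin r,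
      Polynomial.eval (z + h/2)
        (Lagrange.basis Finset.univ (fun j => z + c j * h) l) = w l := by
    intro h hne l
    rw [Lagrange.basis, Polynomial.eval_prod]
    apply Finset.prod_congr rfl
    intro j hj
    simp only [Lagrange.basisDivisor, eval_mul, eval_C, eval_sub, eval_X]
    have h1 : z + c l * h - (z + c j * h) = (c l - c j) * h := by ring
    have h2 : z + h/2 - (z + c j * h) = (1/2 - c j) * h := by ring
    have hlj : c l ≠ c j := fun e => (Finset.mem_erase.mp hj).1 (hcinj e.symm)
    have hne2 : c l - c j ≠ 0 := sub_ne_zero_of_ne hlj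
    rw [h1, h2, mul_inv]
    field_simp
  haveI : Nonempty (Fin r) := ⟨⟨0, hr⟩⟩
  have hsumw : ∑ l, w l = 1 := by
    calc ∑ l, w l
        = ∑ l, Polynomial.eval (z + 1/2)
            (Lagrange.basis Finset.univ (fun j => z + c j * 1) l) :=
          Finset.sum_congr rfl fun l _ => (hbasis 1 one_ne_zero l).symm
      _ = Polynomial.eval (z + 1/2)
            (∑ l, Lagrange.basis Finset.univ (fun j => z + c j * 1) l) :=
          (Polynomial.eval_finset_sum _ _ _).symm
      _ = 1 := by
          rw [Lagrange.sum_basis (hvinj 1 one_ne_zero) Finset.univ_nonempty]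
          simp
  -- the interpolation identity
  have heval : ∀ h : ℝ, 0 < h →
      Polynomial.eval (z + h/2) (p h) = ∑ l, w l * f (z + c l * h) := by
    intro h hh
    have hinj := hvinj h hh.ne'
    have hdlt : (p h).degree < (Finset.univ : Finset (Fin r)).card := by
      rw [Finset.card_univ, Fintype.card_fin]
      calc (p h).degree ≤ ((p h).natDegree : WithBot ℕ) := Polynomial.degree_le_natDegree
        _ ≤ ((r - 1 : ℕ) : WithBot ℕ) := by exact_mod_cast hdeg h hh
        _ < (r : WithBot ℕ) := by exact_mod_cast Nat.sub_lt hr one_pos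
    have hp := Lagrange.eq_interpolate_of_eval_eq (v := fun l : Fin r => z + c l * h)
      (r := fun l : Fin r => f (z + c l * h)) hinj hdlt (fun l _ => hinterp h hh l)
    rw [hp, Lagrange.interpolate_apply, Polynomial.eval_finset_sum]
    refine Finset.sum_congr rfl fun l _ => ?_
    rw [eval_mul, eval_C, hbasis h hh.ne' l, mul_comm]
  -- the centered function `gg`
  set gg : ℝ → ℝ := fun u => f (z + u) - f z with hggdef
  have hgg : ContDiffOn ℝ (⊤ : ℕ∞) gg (ball (0:ℝ) δ) := by
    have h1 : ContDiffOn ℝ (⊤ : ℕ∞) (fun u : ℝ => f (z + u)) (ball (0:ℝ) δ) := by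
      apply hf.comp ((contDiff_const.add contDiff_id).contDiffOn)
      intro u hu
      simpa [Metric.mem_ball, Real.dist_eq] using hu
    exact h1.sub contDiffOn_const
  have hggz : ∀ k < s, iteratedDeriv k gg 0 = 0 := by
    intro k hk
    match k with
    | 0 => simp [hggdef]
    | (m+1) =>
      have hderiv : deriv gg = deriv (fun u => f (z + u)) := by
        funext u
        rw [hggdef]
        exact deriv_sub_const _
      rw [iteratedDeriv_succ', hderiv, ← iteratedDeriv_succ',
        iteratedDeriv_comp_const_add]
      simpa using hcrit (m+1) (Nat.succ_le_succ (Nat.zero_le m)) hk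
  have hO : gg =O[𝓝 (0:ℝ)] fun u => u ^ s :=
    bigO_of_iteratedDeriv_zero s gg δ hδ hgg hggz
  have hOt : ∀ t : ℝ, (fun h : ℝ => gg (t * h)) =O[𝓝[>] (0:ℝ)] fun h => h ^ s := by
    intro t
    have htend : Tendsto (fun h : ℝ => t * h) (𝓝[>] (0:ℝ)) (𝓝 (0:ℝ)) := by
      have h1 : Tendsto (fun h : ℝ => t * h) (𝓝 (0:ℝ)) (𝓝 (t * 0)) :=
        (continuous_const.mul continuous_id).tendsto 0
      rw [mul_zero] at h1
      exact h1.mono_left nhdsWithin_le_nhds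
    have h2 := hO.comp_tendsto htend
    refine h2.trans ?_
    have h3 : (fun h : ℝ => (t * h) ^ s) = fun h : ℝ => t ^ s * h ^ s := by
      funext h; rw [mul_pow]
    rw [Function.comp_def]
    rw [h3]
    exact (isBigO_refl (fun h : ℝ => h ^ s) _).const_mul_left _
  have hmain : (fun h : ℝ => gg (h/2) - ∑ l, w l * gg (c l * h))
      =O[𝓝[>] (0:ℝ)] fun h => h ^ s := by
    apply IsBigO.sub
    · have h2 : (fun h : ℝ => gg (h/2)) = fun h : ℝ => gg ((1/2) * h) := by
        funext h; congr 1; ring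
      rw [h2]; exact hOt (1/2)
    · exact IsBigO.fun_sum fun l _ => (hOt (c l)).const_mul_left (w l)
  refine hmain.congr' ?_ EventuallyEq.rfl
  filter_upwards [self_mem_nhdsWithin] with h hh
  have hh' : (0:ℝ) < h := hh
  rw [heval h hh']
  have hsub : ∑ l, w l * gg (c l * h)
      = (∑ l, w l * f (z + c l * h)) - f z := by
    simp only [hggdef, mul_sub]
    rw [Finset.sum_sub_distrib, ← Finset.sum_mul, hsumw, one_mul]
  rw [hsub]
  simp only [hggdef]
  ring
end
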